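/- arXiv:1604.04258 — 6 statements merged into one kernel-verified Lean document; each statement's English description precedes it below -/
import Mathlib

section
/- Let n ≥ 2 and let F be a field of characteristic 0. On the polynomial ring F[x_1,…,x_n] define the n-ary bracket [f_1,…,f_n] = det((∂f_j/∂x_i)_{i,j=1}^n), the Jacobian determinant. Then this bracket satisfies the Filippov–Jacobi identity: for all g_1,…,g_{n-1}, f_1,…,f_n ∈ F[x_1,…,x_n], [g_1,…,g_{n-1},[f_1,…,f_n]] = Σ_{k=1}^n [f_1,…,f_{k-1},[g_1,…,g_{n-1},f_k],f_{k+1},…,f_n]. (Together with the alternating property of the determinant, this makes F[x_1,…,x_n] — and hence its completion F[[x_1,…,x_n]], the algebra S^n — an n-Lie algebra.) -/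
open MvPolynomial

/-- Append an element at the end of a family indexed by `Fin (n-1)`,
producing a family indexed by `Fin n` (the last slot gets the new element). -/
def snocFam {α : Type*} {n : ℕ} (g : Fin (n - 1) → α) (x : α) : Fin n → α :=
  fun i => if h : (i : ℕ) < n - 1 then g ⟨i, h⟩ else x

/-- The Jacobian-determinant `n`-ary bracket on `F[x_1,…,x_n]`. -/
noncomputable def jacobiBracket (F : Type*) [Field F] (n : ℕ)
    (f : Fin n → MvPolynomial (Fin n) F) : MvPolynomial (Fin n) F :=
  Matrix.det (Matrix.of fun i j => pderiv i (f j))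

/-!
Fixing `g`, the map `X h = [g₁, …, g_{n-1}, h]` is the vector field `X = ∑ c_p ∂_p` whose
coefficients `c_p` are the cofactors of the last column of the Jacobian matrix of `(g, h)`.
For any vector field, `∂_i (X h) = X (∂_i h) + ∑_p ∂_i c_p ∂_p h`; with Jacobi's formula
for the derivative of a determinant this gives
`∑_k [f₁, …, X f_k, …, f_n] = X [f] + (div c) [f]`,
where `div c` is the trace of the Jacobian of `c`, so the Filippov identity amounts to
`div c = 0`. Applying the same formula to `(g₁, …, g_{n-1}, h)`, where `X g_k = 0`, yields
`(div c) · X h = 0`; taking `h = x_p` gives `(div c) · c_p = 0`, hence `div c = 0` because the polynomial ring is a domain.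
-/

theorem Derivation.leibniz_finset_prod {R A ι : Type*} [CommSemiring R] [CommSemiring A]
    [Algebra R A] [DecidableEq ι] (D : Derivation R A A) (s : Finset ι) (f : ι → A) :
    D (∏ i ∈ s, f i) = ∑ i ∈ s, (∏ j ∈ s.erase i, f j) * D (f i) := by
  induction s using Finset.induction_on with
  | empty => simp
  | @insert c s hc ih =>
    rw [Finset.prod_insert hc, D.leibniz, ih, Finset.sum_insert hc, Finset.erase_insert hc,
      smul_eq_mul, smul_eq_mul, Finset.mul_sum, add_comm]
    congr 1
    refine Finset.sum_congr rfl fun i hi => ?_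
    rw [Finset.erase_insert_of_ne (ne_of_mem_of_not_mem hi hc).symm,
      Finset.prod_insert fun h => hc (Finset.mem_of_mem_erase h), mul_assoc]

theorem Derivation.leibniz_det {R A ι : Type*} [CommRing R] [CommRing A] [Algebra R A]
    [Fintype ι] [DecidableEq ι] (D : Derivation R A A) (M : Matrix ι ι A) :
    D M.det = ∑ k, (M.updateCol k fun i => D (M i k)).det := by
  simp only [Matrix.det_apply', map_sum, D.leibniz, D.map_intCast, add_zero,
    smul_eq_mul, mul_zero, D.leibniz_finset_prod, Finset.mul_sum]
  rw [Finset.sum_comm]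
  refine Finset.sum_congr rfl fun k _ => Finset.sum_congr rfl fun τ _ => ?_
  rw [← Finset.mul_prod_erase _ _ (Finset.mem_univ k)]
  simp only [Matrix.updateCol_self]
  rw [Finset.prod_congr rfl fun i hi => Matrix.updateCol_ne (Finset.ne_of_mem_erase hi)]
  ring

theorem Matrix.det_updateCol_eq_sum_adjugate_mul {A ι : Type*} [CommRing A] [Fintype ι]
    [DecidableEq ι] (M : Matrix ι ι A) (k : ι) (v : ι → A) :
    (M.updateCol k v).det = ∑ p, M.adjugate k p * v p := by
  rw [← Matrix.cramer_apply, Matrix.cramer_eq_adjugate_mulVec]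
  rfl

theorem Matrix.sum_det_updateCol_mul {A ι : Type*} [CommRing A] [Fintype ι]
    [DecidableEq ι] (N M : Matrix ι ι A) :
    ∑ k, (M.updateCol k fun i => (N * M) i k).det = N.trace * M.det := by
  simp only [Matrix.det_updateCol_eq_sum_adjugate_mul]
  change (M.adjugate * (N * M)).trace = _
  rw [Matrix.trace_mul_comm, Matrix.mul_assoc, Matrix.mul_adjugate, Matrix.mul_smul,
    Matrix.mul_one, Matrix.trace_smul, smul_eq_mul, mul_comm]

namespace MvPolynomial
variable {R σ : Type*} [CommRing R]

theorem pderiv_pderiv_comm [DecidableEq σ] (a b : σ) (p : MvPolynomial σ R) :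
    pderiv a (pderiv b p) = pderiv b (pderiv a p) := by
  have h : ⁅pderiv a, pderiv b⁆ = (0 : Derivation R (MvPolynomial σ R) (MvPolynomial σ R)) :=
    derivation_ext fun i => by
      rw [Derivation.commutator_apply, pderiv_X, pderiv_X, Pi.single_apply, Pi.single_apply]
      split_ifs <;> simp
  rw [← sub_eq_zero, ← Derivation.commutator_apply, h, Derivation.zero_apply]

noncomputable def jacobian (f : σ → MvPolynomial σ R) : Matrix σ σ (MvPolynomial σ R) :=
  Matrix.of fun i j => pderiv i (f j)

theorem jacobian_update [DecidableEq σ] (f : σ → MvPolynomial σ R) (k : σ)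
    (h : MvPolynomial σ R) :
    jacobian (Function.update f k h) = (jacobian f).updateCol k fun i => pderiv i h := by
  ext i j
  rcases eq_or_ne j k with rfl | hjk
  · simp [jacobian]
  · simp [jacobian, hjk]

variable [Fintype σ]

noncomputable def vectorField (c : σ → MvPolynomial σ R) :
    Derivation R (MvPolynomial σ R) (MvPolynomial σ R) :=
  ∑ p, c p • pderiv p

theorem vectorField_apply (c : σ → MvPolynomial σ R) (h : MvPolynomial σ R) :
    vectorField c h = ∑ p, c p * pderiv p h := by
  change Derivation.coeFnAddMonoidHom (∑ p, c p • pderiv p) h = _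
  simp [map_sum, Finset.sum_apply, Derivation.coe_smul]

theorem vectorField_X [DecidableEq σ] (c : σ → MvPolynomial σ R) (p : σ) :
    vectorField c (X p) = c p := by
  simp [vectorField_apply, pderiv_X, Pi.single_apply]

theorem pderiv_vectorField (c : σ → MvPolynomial σ R) (i : σ) (h : MvPolynomial σ R) :
    pderiv i (vectorField c h) =
      vectorField c (pderiv i h) + ∑ p, pderiv i (c p) * pderiv p h := by
  classical
  simp only [vectorField_apply, map_sum, Derivation.leibniz, smul_eq_mul, pderiv_pderiv_comm i,
    ← Finset.sum_add_distrib]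
  exact Finset.sum_congr rfl fun p _ => by ring

theorem sum_det_jacobian_update_vectorField [DecidableEq σ] (c f : σ → MvPolynomial σ R) :
    ∑ k, (jacobian (Function.update f k (vectorField c (f k)))).det =
      vectorField c (jacobian f).det + (jacobian c).trace * (jacobian f).det := by
  have hcol : ∀ k, (fun i => pderiv i (vectorField c (f k))) =
      (fun i => vectorField c (jacobian f i k)) + fun i => (jacobian c * jacobian f) i k := by
    intro k
    funext i
    simp only [pderiv_vectorField, Pi.add_apply, Matrix.mul_apply, jacobian, Matrix.of_apply]
  simp only [jacobian_update, hcol, Matrix.det_updateCol_add, Finset.sum_add_distrib,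
    Derivation.leibniz_det, Matrix.sum_det_updateCol_mul]

end MvPolynomial

section Filippov
variable {n : ℕ} (hn : 0 < n)

def Fin.lastOfPos : Fin n := ⟨n - 1, Nat.sub_lt hn Nat.one_pos⟩

variable {α : Type*} (g : Fin (n - 1) → α)

theorem snocFam_lastOfPos (x : α) : snocFam g x (Fin.lastOfPos hn) = x := by
  simp [snocFam, Fin.lastOfPos]

theorem snocFam_apply_of_ne_lastOfPos {k : Fin n} (hk : k ≠ Fin.lastOfPos hn) (x y : α) :
    snocFam g x k = snocFam g y k := by
  have : (k : ℕ) ≠ n - 1 := fun h => hk (Fin.ext h)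
  simp [snocFam, show (k : ℕ) < n - 1 by omega]

theorem update_snocFam_lastOfPos (x y : α) :
    Function.update (snocFam g x) (Fin.lastOfPos hn) y = snocFam g y := by
  funext k
  rcases eq_or_ne k (Fin.lastOfPos hn) with rfl | hk
  · simp [snocFam_lastOfPos]
  · simp [hk, snocFam_apply_of_ne_lastOfPos hn g hk x y]

variable {R : Type*} [CommRing R]

noncomputable def hamiltonianField (g : Fin (n - 1) → MvPolynomial (Fin n) R) :
    Fin n → MvPolynomial (Fin n) R :=
  (jacobian (snocFam g 0)).adjugate (Fin.lastOfPos hn)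

theorem det_jacobian_snocFam (g : Fin (n - 1) → MvPolynomial (Fin n) R)
    (h : MvPolynomial (Fin n) R) :
    (jacobian (snocFam g h)).det = vectorField (hamiltonianField hn g) h := by
  rw [← update_snocFam_lastOfPos hn g 0 h, jacobian_update,
    Matrix.det_updateCol_eq_sum_adjugate_mul, vectorField_apply]
  rfl

theorem vectorField_hamiltonianField_snocFam_of_ne (g : Fin (n - 1) → MvPolynomial (Fin n) R)
    {k : Fin n} (hk : k ≠ Fin.lastOfPos hn) (h : MvPolynomial (Fin n) R) :
    vectorField (hamiltonianField hn g) (snocFam g h k) = 0 := by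
  rw [← det_jacobian_snocFam hn]
  refine Matrix.det_zero_of_column_eq hk fun i => ?_
  simp only [jacobian, Matrix.of_apply, snocFam_lastOfPos]
  rw [snocFam_apply_of_ne_lastOfPos hn g hk]

theorem sum_det_jacobian_update_snocFam (g : Fin (n - 1) → MvPolynomial (Fin n) R)
    (h : MvPolynomial (Fin n) R) :
    ∑ k, (jacobian (Function.update (snocFam g h) k
        (vectorField (hamiltonianField hn g) (snocFam g h k)))).det =
      vectorField (hamiltonianField hn g) (vectorField (hamiltonianField hn g) h) := by
  rw [Finset.sum_eq_single (Fin.lastOfPos hn)]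
  · rw [snocFam_lastOfPos, update_snocFam_lastOfPos, det_jacobian_snocFam hn]
  · intro k _ hk
    rw [vectorField_hamiltonianField_snocFam_of_ne hn g hk, jacobian_update]
    exact Matrix.det_eq_zero_of_column_eq_zero k fun i => by simp
  · simp

theorem trace_jacobian_hamiltonianField [IsDomain R]
    (g : Fin (n - 1) → MvPolynomial (Fin n) R) :
    (jacobian (hamiltonianField hn g)).trace = 0 := by
  set c := hamiltonianField hn g
  have hdiv : ∀ h, (jacobian c).trace * vectorField c h = 0 := by
    intro h
    have := sum_det_jacobian_update_vectorField c (snocFam g h)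
    rw [sum_det_jacobian_update_snocFam, det_jacobian_snocFam hn] at this
    linear_combination -this
  by_cases hc : c = 0
  · simp [hc, jacobian, Matrix.trace]
  · obtain ⟨p, hp⟩ := Function.ne_iff.mp hc
    exact (mul_eq_zero.mp (by simpa [vectorField_X] using hdiv (X p))).resolve_right hp

end Filippov

theorem jacobiBracket_eq_det_jacobian (F : Type*) [Field F] (n : ℕ)
    (f : Fin n → MvPolynomial (Fin n) F) : jacobiBracket F n f = (jacobian f).det := rfl

theorem jacobiBracket_filippov_general (F : Type*) [Field F] (n : ℕ) (hn : 2 ≤ n)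
    (g : Fin (n - 1) → MvPolynomial (Fin n) F) (f : Fin n → MvPolynomial (Fin n) F) :
    jacobiBracket F n (snocFam g (jacobiBracket F n f)) =
      ∑ k : Fin n,
        jacobiBracket F n (Function.update f k (jacobiBracket F n (snocFam g (f k)))) := by
  have hn0 : 0 < n := by omega
  simp only [jacobiBracket_eq_det_jacobian, det_jacobian_snocFam hn0]
  rw [sum_det_jacobian_update_vectorField, trace_jacobian_hamiltonianField, zero_mul, add_zero]

/-- The Jacobian determinant bracket on the polynomial ring `F[x_1,…,x_n]`
(`char F = 0`, `n ≥ 2`) satisfies the Filippov–Jacobi identity. -/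
theorem jacobiBracket_filippov (F : Type*) [Field F] [CharZero F] (n : ℕ) (hn : 2 ≤ n)
    (g : Fin (n - 1) → MvPolynomial (Fin n) F) (f : Fin n → MvPolynomial (Fin n) F) :
    jacobiBracket F n (snocFam g (jacobiBracket F n f)) =
      ∑ k : Fin n,
        jacobiBracket F n (Function.update f k (jacobiBracket F n (snocFam g (f k)))) :=
  jacobiBracket_filippov_general F n hn g f
end

section
/- Let n ≥ 2 and let F be a field of characteristic 0. On V = F^{n+1} define the generalized vector product: for v_1,…,v_n ∈ V, [v_1,…,v_n] is the vector whose k-th coordinate (k ∈ Fin (n+1)) equals (−1)^{k+1} times the determinant of the n×n matrix obtained from the (n+1)×n matrix whose j-th column is v_j by deleting row k. Then this n-ary bracket satisfies the Filippov–Jacobi identity: [a_1,…,a_{n-1},[b_1,…,b_n]] = Σ_{k=1}^n [b_1,…,b_{k-1},[a_1,…,a_{n-1},b_k],b_{k+1},…,b_n] for all a_i, b_j ∈ V. (This is the (n+1)-dimensional vector product n-Lie algebra.) -/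
/-- The generalized vector product of `n` vectors in `F^{n+1}`: the `k`-th coordinate is
`(-1)^{k+1}` times the `k`-th `n×n` minor of the `(n+1)×n` matrix whose columns are the
given vectors. -/
def vecProd (F : Type*) [Field F] (n : ℕ)
    (v : Fin n → (Fin (n + 1) → F)) : Fin (n + 1) → F :=
  fun k => (-1 : F) ^ ((k : ℕ) + 1) *
    Matrix.det (Matrix.of fun (i : Fin n) (j : Fin n) => v j (Fin.succAbove k i))

/-!
Pairing with `w` gives `⟪[c₁, …, cₙ], w⟫ = (-1)^(n+1) det (c₁, …, cₙ, w)`. Hence the linear operator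
`D x = [v₁, …, x, …, vₙ]` (with `x` in any fixed slot) is skew, `⟪D x, y⟫ = -⟪x, D y⟫` (swap two rows
of the determinant), and it is traceless, since its `k`-th diagonal entry is a minor with a zero
row. Jacobi's formula `∑ᵢ det (c₁, …, D cᵢ, …, cₙ₊₁) = tr D · det c = 0`, applied to
`c = (b₁, …, bₙ, w)`, turns skewness into `D [b₁, …, bₙ] = ∑ₖ [b₁, …, D bₖ, …, bₙ]`.
-/

open Matrix

theorem Matrix.sum_det_updateRow_mulVec {ι R : Type*} [Fintype ι] [DecidableEq ι] [CommRing R]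
    (A N : Matrix ι ι R) :
    ∑ i, (A.updateRow i (N *ᵥ A i)).det = N.trace * A.det := by
  have expand (i : ι) (x : ι → R) : (A.updateRow i x).det = ∑ l, A.adjugate l i * x l := by
    rw [← cramer_transpose_apply, cramer_eq_adjugate_mulVec, ← adjugate_transpose]
    rfl
  calc ∑ i, (A.updateRow i (N *ᵥ A i)).det
      = (A.adjugate * (A * Nᵀ)).trace := by
        simp only [expand, trace, diag_apply, mul_apply]
        rw [Finset.sum_comm]
        simp [mulVec, dotProduct, Finset.mul_sum, mul_comm]
    _ = N.trace * A.det := by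
        rw [← Matrix.mul_assoc, adjugate_mul, smul_mul, Matrix.one_mul, trace_smul,
          trace_transpose, smul_eq_mul, mul_comm]

section VecProd

variable {F : Type*} [Field F] {n : ℕ}

theorem vecProd_apply_eq_det_submatrix (v : Fin n → Fin (n + 1) → F) (k : Fin (n + 1)) :
    vecProd F n v k = (-1) ^ ((k : ℕ) + 1) * ((of v).submatrix id k.succAbove).det := by
  rw [vecProd, ← det_transpose]
  rfl

theorem vecProd_dotProduct (c : Fin n → Fin (n + 1) → F) (w : Fin (n + 1) → F) :
    vecProd F n c ⬝ᵥ w = (-1) ^ (n + 1) * (of (Fin.snoc c w)).det := by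
  rw [det_succ_row _ (Fin.last n), Finset.mul_sum, dotProduct]
  refine Finset.sum_congr rfl fun k _ => ?_
  have hminor : (of (Fin.snoc c w)).submatrix (Fin.last n).succAbove k.succAbove =
      (of c).submatrix id k.succAbove := by
    ext i j
    simp [Fin.succAbove_last]
  rw [vecProd_apply_eq_det_submatrix, hminor]
  simp only [of_apply, Fin.snoc_last, Fin.val_last]
  have hsign : (-1 : F) ^ (n + 1) * (-1) ^ (n + (k : ℕ)) = (-1) ^ ((k : ℕ) + 1) := by
    rw [← pow_add, show n + 1 + (n + (k : ℕ)) = (k : ℕ) + 1 + 2 * n by ring, pow_add, pow_mul]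
    norm_num
  rw [← hsign]
  ring

theorem vecProd_update_apply (v : Fin n → Fin (n + 1) → F) (j : Fin n) (x : Fin (n + 1) → F)
    (k : Fin (n + 1)) :
    vecProd F n (Function.update v j x) k = (-1) ^ ((k : ℕ) + 1) *
      (((of v).submatrix id k.succAbove).updateRow j (x ∘ k.succAbove)).det := by
  rw [vecProd_apply_eq_det_submatrix]
  congr 2
  ext i l
  rcases eq_or_ne i j with rfl | h
  · simp
  · simp [h]

def vecProdUpdate (v : Fin n → Fin (n + 1) → F) (j : Fin n) :
    (Fin (n + 1) → F) →ₗ[F] Fin (n + 1) → F where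
  toFun x := vecProd F n (Function.update v j x)
  map_add' x y := by
    ext k
    rw [Pi.add_apply, vecProd_update_apply, vecProd_update_apply, vecProd_update_apply,
      Pi.add_comp, det_updateRow_add, mul_add]
  map_smul' c x := by
    ext k
    rw [Pi.smul_apply, vecProd_update_apply, vecProd_update_apply, Pi.smul_comp,
      det_updateRow_smul, smul_eq_mul, RingHom.id_apply]
    ring

@[simp]
theorem vecProdUpdate_apply (v : Fin n → Fin (n + 1) → F) (j : Fin n) (x : Fin (n + 1) → F) :
    vecProdUpdate v j x = vecProd F n (Function.update v j x) :=
  rfl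

theorem trace_toMatrix'_vecProdUpdate (v : Fin n → Fin (n + 1) → F) (j : Fin n) :
    (LinearMap.toMatrix' (vecProdUpdate v j)).trace = 0 := by
  refine Finset.sum_eq_zero fun k _ => ?_
  rw [diag_apply, LinearMap.toMatrix'_apply, vecProdUpdate_apply, vecProd_update_apply,
    det_eq_zero_of_row_eq_zero j fun i => ?_, mul_zero]
  simp [Fin.succAbove_ne k i]

theorem det_of_snoc_update_swap (v : Fin n → Fin (n + 1) → F) (j : Fin n)
    (x y : Fin (n + 1) → F) :
    (of (Fin.snoc (Function.update v j x) y)).det =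
      -(of (Fin.snoc (Function.update v j y) x)).det := by
  have hswap : Fin.snoc (Function.update v j x) y =
      Fin.snoc (α := fun _ => Fin (n + 1) → F) (Function.update v j y) x ∘
        Equiv.swap j.castSucc (Fin.last n) := by
    funext i
    induction i using Fin.lastCases with
    | last =>
      rw [Function.comp_apply, Equiv.swap_apply_right, Fin.snoc_last, Fin.snoc_castSucc,
        Function.update_self]
    | cast i =>
      rcases eq_or_ne i j with rfl | h
      · rw [Function.comp_apply, Equiv.swap_apply_left, Fin.snoc_last, Fin.snoc_castSucc,
          Function.update_self]
      · rw [Function.comp_apply, Equiv.swap_apply_of_ne_of_ne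
          (Fin.castSucc_injective _ |>.ne h) (Fin.castSucc_ne_last i), Fin.snoc_castSucc,
          Fin.snoc_castSucc, Function.update_of_ne h, Function.update_of_ne h]
  rw [hswap]
  change ((of (Fin.snoc (Function.update v j y) x)).submatrix
    (Equiv.swap j.castSucc (Fin.last n)) id).det = _
  rw [det_permute, Equiv.Perm.sign_swap (Fin.castSucc_ne_last j)]
  simp

theorem vecProdUpdate_vecProd (v : Fin n → Fin (n + 1) → F) (j : Fin n)
    (b : Fin n → Fin (n + 1) → F) :
    vecProdUpdate v j (vecProd F n b) =
      ∑ k, vecProd F n (Function.update b k (vecProdUpdate v j (b k))) := by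
  refine dotProduct_eq _ _ fun w => ?_
  have hrow (k : Fin (n + 1)) :
      (of (Fin.snoc b w)).updateRow k
          (LinearMap.toMatrix' (vecProdUpdate v j) *ᵥ of (Fin.snoc b w) k) =
        of (Function.update (Fin.snoc (α := fun _ => Fin (n + 1) → F) b w) k
          (vecProdUpdate v j (Fin.snoc (α := fun _ => Fin (n + 1) → F) b w k))) := by
    rw [LinearMap.toMatrix'_mulVec]
    rfl
  have htrace :=
    sum_det_updateRow_mulVec (of (Fin.snoc b w)) (LinearMap.toMatrix' (vecProdUpdate v j))
  simp only [hrow, trace_toMatrix'_vecProdUpdate, zero_mul, Fin.sum_univ_castSucc,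
    Fin.snoc_castSucc, Fin.snoc_last, ← Fin.snoc_update, Fin.update_snoc_last] at htrace
  calc vecProdUpdate v j (vecProd F n b) ⬝ᵥ w
      = -(vecProdUpdate v j w ⬝ᵥ vecProd F n b) := by
        rw [vecProdUpdate_apply, vecProdUpdate_apply, vecProd_dotProduct, vecProd_dotProduct,
          det_of_snoc_update_swap, mul_neg]
    _ = (-1) ^ (n + 1) *
          ∑ k, (of (Fin.snoc (Function.update b k (vecProdUpdate v j (b k))) w)).det := by
        rw [dotProduct_comm, vecProd_dotProduct, eq_neg_of_add_eq_zero_left htrace, mul_neg]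
    _ = (∑ k, vecProd F n (Function.update b k (vecProdUpdate v j (b k)))) ⬝ᵥ w := by
        simp only [sum_dotProduct, vecProd_dotProduct, Finset.mul_sum]

theorem snocFam_eq_update {α : Type*} (a : Fin (n - 1) → α) (x y : α) (h : n - 1 < n) :
    snocFam a x = Function.update (snocFam a y) ⟨n - 1, h⟩ x := by
  funext i
  rcases eq_or_ne i ⟨n - 1, h⟩ with rfl | hi
  · simp [snocFam]
  · have : (i : ℕ) < n - 1 := by
      have : (i : ℕ) ≠ n - 1 := fun h' => hi (Fin.ext h')
      omega
    simp [snocFam, hi, this]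

end VecProd

theorem vecProd_filippov_general (F : Type*) [Field F] (n : ℕ) (hn : 2 ≤ n)
    (a : Fin (n - 1) → (Fin (n + 1) → F)) (b : Fin n → (Fin (n + 1) → F)) :
    vecProd F n (snocFam a (vecProd F n b)) =
      ∑ k : Fin n,
        vecProd F n (Function.update b k (vecProd F n (snocFam a (b k)))) := by
  have hlast : n - 1 < n := by omega
  have hsnoc (x : Fin (n + 1) → F) :
      vecProd F n (snocFam a x) = vecProdUpdate (snocFam a 0) ⟨n - 1, hlast⟩ x := by
    rw [vecProdUpdate_apply, ← snocFam_eq_update]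
  simp only [hsnoc]
  exact vecProdUpdate_vecProd _ _ b

/-- The generalized vector product on `F^{n+1}` (`char F = 0`, `n ≥ 2`) satisfies the
Filippov–Jacobi identity: it is the `(n+1)`-dimensional vector product `n`-Lie algebra. -/
theorem vecProd_filippov (F : Type*) [Field F] [CharZero F] (n : ℕ) (hn : 2 ≤ n)
    (a : Fin (n - 1) → (Fin (n + 1) → F)) (b : Fin n → (Fin (n + 1) → F)) :
    vecProd F n (snocFam a (vecProd F n b)) =
      ∑ k : Fin n,
        vecProd F n (Function.update b k (vecProd F n (snocFam a (b k)))) :=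
  vecProd_filippov_general F n hn a b
end

section
/- Let (V,B) be an n-Lie algebra over a field F of characteristic 0 with n ≥ 2, and let M be an n-Lie module over V, i.e. the direct sum V ⊕ M carries an alternating n-multilinear bracket B' satisfying the Filippov–Jacobi identity such that B' restricts to B on V, B'(a_1,…,a_{n-1},m) ∈ M for a_i ∈ V and m ∈ M, and B' vanishes whenever at least two of its arguments lie in M. Define ρ(a_1∧⋯∧a_{n-1}) ∈ End_F(M) by ρ(a_1∧⋯∧a_{n-1})(m) = B'(a_1,…,a_{n-1},m). Then ρ extends to a well-defined F-linear map ρ : ⋀^{n-1}V → End_F(M) which is a homomorphism of Lie algebras: ρ([x,y]) = ρ(x)∘ρ(y) − ρ(y)∘ρ(x) for all x, y ∈ ⋀^{n-1}V, where [·,·] is the bracket on ⋀^{n-1}V determined by [a_1∧⋯∧a_{n-1}, b_1∧⋯∧b_{n-1}] = Σ_{i=1}^{n-1} b_1∧⋯∧D_{a_1,…,a_{n-1}}(b_i)∧⋯∧b_{n-1}. -/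
/-- The Filippov–Jacobi identity for an `n`-ary bracket. -/
def IsFilippov {F V : Type*} [Field F] [AddCommGroup V] [Module F V] {n : ℕ}
    (B : (Fin n → V) → V) : Prop :=
  ∀ (a : Fin (n - 1) → V) (b : Fin n → V),
    B (snocFam a (B b)) = ∑ k : Fin n, B (Function.update b k (B (snocFam a (b k))))

/-- The decomposable element `a_1 ∧ ⋯ ∧ a_k` of the `k`-th exterior power `⋀^k V`. -/
noncomputable def wedge (F : Type*) [Field F] {V : Type*} [AddCommGroup V] [Module F V]
    (k : ℕ) (a : Fin k → V) : ⋀[F]^k V :=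
  ⟨ExteriorAlgebra.ιMulti F k a, ExteriorAlgebra.ιMulti_range F k (Set.mem_range_self a)⟩

lemma snocFam_succ_eq_snoc {α : Type*} {p : ℕ} (g : Fin p → α) (x : α) :
    snocFam (n := p + 1) g x = Fin.snoc g x := by
  funext i
  refine Fin.lastCases ?_ (fun j => ?_) i <;> simp [snocFam, Fin.snoc]

lemma wedge_eq_ιMulti (F : Type*) [Field F] {V : Type*} [AddCommGroup V] [Module F V]
    (k : ℕ) (a : Fin k → V) : wedge F k a = exteriorPower.ιMulti F k a :=
  rfl

lemma update_prodMk_const {ι α β : Type*} [DecidableEq ι] (b : ι → α) (c : β) (k : ι) (w : α) :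
    Function.update (fun i => (b i, c)) k (w, c) = fun i => (Function.update b k w i, c) :=
  (Function.comp_update (fun v => (v, c)) b k w).symm

section Action

variable {R V M : Type*} [CommRing R] [AddCommGroup V] [Module R V] [AddCommGroup M] [Module R M]
  {p : ℕ}

noncomputable def nLieModuleAction (B' : (V × M) [⋀^Fin (p + 1)]→ₗ[R] (V × M)) :
    V [⋀^Fin p]→ₗ[R] Module.End R M where
  toMultilinearMap :=
    (LinearMap.llcomp R M (V × M) M (LinearMap.snd R V M) ∘ₗ
        LinearMap.lcomp R (V × M) (LinearMap.inr R V M)).compMultilinearMap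
      (B'.toMultilinearMap.curryRight.compLinearMap fun _ => LinearMap.inl R V M)
  map_eq_zero_of_eq' a i j h hij := LinearMap.ext fun m => by
    change (B' (Fin.snoc (fun k => (a k, 0)) (0, m))).2 = 0
    rw [B'.map_eq_zero_of_eq _ (i := i.castSucc) (j := j.castSucc) (by simp [h])
      (by simpa using hij)]
    rfl

lemma nLieModuleAction_apply (B' : (V × M) [⋀^Fin (p + 1)]→ₗ[R] (V × M)) (a : Fin p → V)
    (m : M) : nLieModuleAction B' a m = (B' (Fin.snoc (fun i => (a i, 0)) (0, m))).2 :=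
  rfl

variable {B : V [⋀^Fin (p + 1)]→ₗ[R] V} {B' : (V × M) [⋀^Fin (p + 1)]→ₗ[R] (V × M)}

lemma apply_snoc_inr_eq (hintoM : ∀ (a : Fin p → V) (m : M),
      (B' (Fin.snoc (fun i => (a i, 0)) (0, m))).1 = 0) (a : Fin p → V) (m : M) :
    B' (Fin.snoc (fun i => (a i, 0)) (0, m)) = (0, nLieModuleAction B' a m) :=
  Prod.ext (hintoM a m) rfl

lemma apply_snoc_inl_eq (hrestr : ∀ a : Fin (p + 1) → V, B' (fun i => (a i, (0 : M))) = (B a, 0))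
    (a : Fin p → V) (v : V) :
    B' (Fin.snoc (fun i => (a i, 0)) (v, 0)) = (B (Fin.snoc a v), 0) := by
  rw [← hrestr]
  exact congrArg B' (Fin.comp_snoc (fun w => (w, (0 : M))) a v).symm

end Action

lemma map_bracket_eq_commutator_of_span_eq_top {R L A ι : Type*} [CommRing R] [AddCommGroup L]
    [Module R L] [Ring A] [Algebra R A] {v : ι → L} (hv : Submodule.span R (Set.range v) = ⊤)
    (ρ : L →ₗ[R] A) (Br : L →ₗ[R] L →ₗ[R] L)
    (h : ∀ i j, ρ (Br (v i) (v j)) = ρ (v i) * ρ (v j) - ρ (v j) * ρ (v i)) (x y : L) :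
    ρ (Br x y) = ρ x * ρ y - ρ y * ρ x := by
  have key :
      Br.compr₂ ρ = (LinearMap.mul R A).compl₁₂ ρ ρ - (LinearMap.mul R A).flip.compl₁₂ ρ ρ :=
    LinearMap.ext_on_range hv fun i => LinearMap.ext_on_range hv fun j => by simpa using h i j
  simpa using LinearMap.congr_fun₂ key x y

section Filippov

variable {F V M : Type*} [Field F] [AddCommGroup V] [Module F V] [AddCommGroup M] [Module F M]
  {p : ℕ} {B : V [⋀^Fin (p + 1)]→ₗ[F] V} {B' : (V × M) [⋀^Fin (p + 1)]→ₗ[F] (V × M)}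

theorem nLieModuleAction_commutator (hfil : IsFilippov (F := F) (fun v => B' v))
    (hrestr : ∀ a : Fin (p + 1) → V, B' (fun i => (a i, (0 : M))) = (B a, 0))
    (hintoM : ∀ (a : Fin p → V) (m : M), (B' (Fin.snoc (fun i => (a i, 0)) (0, m))).1 = 0)
    (a b : Fin p → V) :
    nLieModuleAction B' a * nLieModuleAction B' b - nLieModuleAction B' b * nLieModuleAction B' a
      = ∑ k, nLieModuleAction B' (Function.update b k (B (Fin.snoc a (b k)))) := by
  ext m
  -- `i : Fin p`, not the `Fin (p + 1 - 1)` that `hfil` expects, so that the lemmas below match.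
  have h := congrArg Prod.snd
    (hfil (fun i : Fin p => (a i, 0)) (Fin.snoc (fun i => (b i, 0)) (0, m)))
  simp only [snocFam_succ_eq_snoc, Fin.sum_univ_castSucc, Fin.snoc_castSucc, Fin.snoc_last,
    apply_snoc_inr_eq hintoM, apply_snoc_inl_eq hrestr, Fin.update_snoc_last, ← Fin.snoc_update,
    update_prodMk_const, Prod.snd_add, Prod.snd_sum] at h
  simp only [LinearMap.sub_apply, Module.End.mul_apply, LinearMap.coe_sum, Finset.sum_apply, h,
    add_sub_cancel_right]

end Filippov

theorem nLieModule_gives_lie_rep_general {F : Type*} [Field F]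
    {V : Type*} [AddCommGroup V] [Module F V] (n : ℕ) (hn : 2 ≤ n)
    (B : V [⋀^Fin n]→ₗ[F] V)
    (M : Type*) [AddCommGroup M] [Module F M]
    (B' : (V × M) [⋀^Fin n]→ₗ[F] (V × M))
    (hB'fil : IsFilippov (F := F) (fun v => B' v))
    (hrestr : ∀ a : Fin n → V, B' (fun i => (a i, (0 : M))) = (B a, 0))
    (hintoM : ∀ (a : Fin (n - 1) → V) (m : M),
      (B' (snocFam (fun i => ((a i : V), (0 : M))) ((0 : V), m))).1 = 0)
    (Br : ⋀[F]^(n-1) V →ₗ[F] ⋀[F]^(n-1) V →ₗ[F] ⋀[F]^(n-1) V)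
    (hBr : ∀ a b : Fin (n - 1) → V,
      Br (wedge F (n-1) a) (wedge F (n-1) b) =
        ∑ i : Fin (n - 1), wedge F (n-1) (Function.update b i (B (snocFam a (b i))))) :
    ∃ ρ : ⋀[F]^(n-1) V →ₗ[F] Module.End F M,
      (∀ (a : Fin (n - 1) → V) (m : M),
        ρ (wedge F (n-1) a) m = (B' (snocFam (fun i => ((a i : V), (0 : M))) ((0 : V), m))).2) ∧
      (∀ x y : ⋀[F]^(n-1) V, ρ (Br x y) = ρ x * ρ y - ρ y * ρ x) := by
  obtain ⟨p, rfl⟩ : ∃ p, n = p + 1 := ⟨n - 1, by omega⟩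
  simp only [snocFam_succ_eq_snoc, wedge_eq_ιMulti] at hintoM hBr ⊢
  refine ⟨exteriorPower.alternatingMapLinearEquiv (nLieModuleAction B'), fun a m => ?_,
    map_bracket_eq_commutator_of_span_eq_top (exteriorPower.ιMulti_span F (p + 1 - 1) V) _ Br
      fun a b => ?_⟩
  · rw [exteriorPower.alternatingMapLinearEquiv_apply_ιMulti, nLieModuleAction_apply]
  · simp only [hBr, map_sum, exteriorPower.alternatingMapLinearEquiv_apply_ιMulti]
    exact (nLieModuleAction_commutator hB'fil hrestr hintoM a b).symm

/-- If `M` is an `n`-Lie module over the `n`-Lie algebra `(V, B)` — i.e. `V ⊕ M` carries an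
alternating `n`-bracket `B'` satisfying the Filippov–Jacobi identity which restricts to `B`
on `V`, sends `(a_1,…,a_{n-1},m)` into `M`, and vanishes when two arguments lie in `M` —
then `ρ(a_1∧⋯∧a_{n-1})(m) := B'(a_1,…,a_{n-1},m)` extends to a well-defined linear map
`ρ : ⋀^{n-1}V → End_F(M)` which is a Lie algebra homomorphism for the bracket `Br` on
`⋀^{n-1}V` induced by `B`. -/
theorem nLieModule_gives_lie_rep {F : Type*} [Field F] [CharZero F]
    {V : Type*} [AddCommGroup V] [Module F V] (n : ℕ) (hn : 2 ≤ n)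
    (B : V [⋀^Fin n]→ₗ[F] V)
    (hB : IsFilippov (F := F) (fun v => B v))
    (M : Type*) [AddCommGroup M] [Module F M]
    (B' : (V × M) [⋀^Fin n]→ₗ[F] (V × M))
    (hB'fil : IsFilippov (F := F) (fun v => B' v))
    (hrestr : ∀ a : Fin n → V, B' (fun i => (a i, (0 : M))) = (B a, 0))
    (hintoM : ∀ (a : Fin (n - 1) → V) (m : M),
      (B' (snocFam (fun i => ((a i : V), (0 : M))) ((0 : V), m))).1 = 0)
    (htwoM : ∀ c : Fin n → V × M, ∀ i j : Fin n,
      i ≠ j → (c i).1 = 0 → (c j).1 = 0 → B' c = 0)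
    (Br : ⋀[F]^(n-1) V →ₗ[F] ⋀[F]^(n-1) V →ₗ[F] ⋀[F]^(n-1) V)
    (hBr : ∀ a b : Fin (n - 1) → V,
      Br (wedge F (n-1) a) (wedge F (n-1) b) =
        ∑ i : Fin (n - 1), wedge F (n-1) (Function.update b i (B (snocFam a (b i))))) :
    ∃ ρ : ⋀[F]^(n-1) V →ₗ[F] Module.End F M,
      (∀ (a : Fin (n - 1) → V) (m : M),
        ρ (wedge F (n-1) a) m = (B' (snocFam (fun i => ((a i : V), (0 : M))) ((0 : V), m))).2) ∧
      (∀ x y : ⋀[F]^(n-1) V, ρ (Br x y) = ρ x * ρ y - ρ y * ρ x) :=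
  nLieModule_gives_lie_rep_general n hn B M B' hB'fil hrestr hintoM Br hBr
end

section
/- Let (V,B) be an n-Lie algebra over a field F of characteristic 0 with n ≥ 2, let M be an F-vector space, and let ρ : ⋀^{n-1}V → End_F(M) be an F-linear map such that (i) ρ([x,y]) = ρ(x)∘ρ(y) − ρ(y)∘ρ(x) for all x,y ∈ ⋀^{n-1}V, where [·,·] is the bracket on ⋀^{n-1}V determined by [a_1∧⋯∧a_{n-1}, b_1∧⋯∧b_{n-1}] = Σ_{i=1}^{n-1} b_1∧⋯∧D_{a_1,…,a_{n-1}}(b_i)∧⋯∧b_{n-1}, and (ii) for all a_1,…,a_{2n-2} ∈ V, ρ(B(a_1,…,a_n)∧a_{n+1}∧⋯∧a_{2n-2}) = Σ_{i=1}^n (−1)^{i+n} ρ(a_1∧⋯∧â_i∧⋯∧a_n)∘ρ(a_i∧a_{n+1}∧⋯∧a_{2n-2}) (hat denotes omission). Then the n-ary bracket B' on V ⊕ M defined by: B' = B when all arguments lie in V; B'(a_1,…,a_{i-1}, m, a_{i+1},…,a_n) = (−1)^{n−i} ρ(a_1∧⋯∧â_i∧⋯∧a_n)(m) for a_j ∈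 V, m ∈ M; and B' = 0 whenever at least two arguments lie in M; is an alternating n-multilinear map satisfying the Filippov–Jacobi identity. Thus M is an n-Lie module over V. -/
/-- The family `a_1, …, â_i, …, a_n` (omit the `i`-th entry), indexed by `Fin (n-1)`. -/
def omitFam {V : Type*} {n : ℕ} (hn : 2 ≤ n) (a : Fin n → V) (i : Fin n) :
    Fin (n - 1) → V :=
  fun k => a (Fin.cast (by omega : n - 1 + 1 = n)
    ((Fin.cast (by omega : n = n - 1 + 1) i).succAbove k))

/-- The family `x, c_1, …, c_{n-2}`, indexed by `Fin (n-1)`. -/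
def consFam {V : Type*} {n : ℕ} (hn : 2 ≤ n) (x : V) (c : Fin (n - 2) → V) :
    Fin (n - 1) → V :=
  Fin.cons x c ∘ Fin.cast (by omega : n - 1 = n - 2 + 1)

/-!
Write `n = q + 2`. Since `(-1)^(n-i) = (-1)^(q+1) (-1)^i`, the `M`-component of `B'` is
`(-1)^(q+1)` times the alternatization `Σ_k (-1)^k ρ(v_1 ∧ ⋯ v̂_k ⋯ ∧ v_n)(m_k)` of the map
`(v, m) ↦ (w ↦ ρ(∧ w)(m))`; this is what makes `B'` alternating.

Both sides of the Filippov–Jacobi identity for `B'` are linear in the `M`-parts of the arguments.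
The terms carrying the `M`-part of one of the first `n - 1` arguments agree by condition (ii).
The terms carrying the `M`-part `m_j` of the `j`-th of the last `n` arguments `b` agree by
condition (i), applied to `a_1 ∧ ⋯ ∧ a_{n-1}` and `b_1 ∧ ⋯ b̂_j ⋯ ∧ b_n`, once the double sum
over pairs `k ≠ j` on the right-hand side is reindexed.
-/

open Function

theorem neg_one_pow_sub_of_le {R : Type*} [Ring R] {m n : ℕ} (h : n ≤ m) :
    (-1 : R) ^ (m - n) = (-1) ^ m * (-1) ^ n := by
  obtain ⟨d, rfl⟩ := Nat.exists_eq_add_of_le h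
  rw [Nat.add_sub_cancel_left, add_comm n d, pow_add, mul_assoc, ← pow_add, ← two_mul, pow_mul,
    neg_one_sq, one_pow, mul_one]

theorem Fin.sum_sum_succAbove_comm {M : Type*} [AddCancelCommMonoid M] {n : ℕ}
    (g : Fin (n + 1) → Fin (n + 1) → M) :
    ∑ k, ∑ t, g k (k.succAbove t) = ∑ j, ∑ t, g (j.succAbove t) j := by
  have h := Finset.sum_comm (s := Finset.univ) (t := Finset.univ) (f := g)
  simp only [fun k => Fin.sum_univ_succAbove (g k) k, fun j => Fin.sum_univ_succAbove (g · j) j,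
    Finset.sum_add_distrib] at h
  exact add_left_cancel h

theorem Fin.removeNth_castSucc_snoc {α : Type*} {n : ℕ} (i : Fin (n + 1))
    (x : Fin (n + 1) → α) (y : α) :
    i.castSucc.removeNth (Fin.snoc x y : Fin (n + 2) → α) = Fin.snoc (i.removeNth x) y := by
  funext t
  refine Fin.lastCases ?_ (fun s => ?_) t <;> simp [Fin.removeNth]

theorem AlternatingMap.map_snoc {R M N : Type*} [CommRing R] [AddCommGroup M] [Module R M]
    [AddCommGroup N] [Module R N] {n : ℕ} (f : M [⋀^Fin (n + 1)]→ₗ[R] N) (v : Fin n → M)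
    (x : M) : f (Fin.snoc v x) = (-1 : R) ^ n • f (Fin.cons x v) := by
  rw [← Fin.insertNth_last', f.map_insertNth, Fin.val_last, ← Int.cast_smul_eq_zsmul R]
  push_cast
  rfl

section ExtBracket

variable {R V M : Type*} [CommRing R] [AddCommGroup V] [Module R V] [AddCommGroup M] [Module R M]

noncomputable def wedgeRep {k : ℕ} (ρ : ⋀[R]^k V →ₗ[R] Module.End R M) :
    V [⋀^Fin k]→ₗ[R] Module.End R M :=
  ρ.compAlternatingMap (exteriorPower.ιMulti R k)

noncomputable def actionCochain {k : ℕ} (ρ : ⋀[R]^k V →ₗ[R] Module.End R M) :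
    (V × M) →ₗ[R] (V × M) [⋀^Fin k]→ₗ[R] M where
  toFun z := (LinearMap.applyₗ z.2).compAlternatingMap
    ((wedgeRep ρ).compLinearMap (LinearMap.fst R V M))
  map_add' _ _ := by ext; simp
  map_smul' _ _ := by ext; simp

variable {q : ℕ} (B : V [⋀^Fin (q + 2)]→ₗ[R] V) (ρ : ⋀[R]^(q + 1) V →ₗ[R] Module.End R M)

noncomputable def extAction : (V × M) [⋀^Fin (q + 2)]→ₗ[R] M :=
  AlternatingMap.alternatizeUncurryFin (actionCochain ρ)

noncomputable def extBracket : (V × M) [⋀^Fin (q + 2)]→ₗ[R] (V × M) :=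
  (B.compLinearMap (LinearMap.fst R V M)).prod ((-1 : R) ^ (q + 1) • extAction ρ)

-- Conditions (i) and (ii) on `ρ`, read on decomposable elements.
def IsBracketRep : Prop :=
  ∀ x w : Fin (q + 1) → V, wedgeRep ρ x * wedgeRep ρ w - wedgeRep ρ w * wedgeRep ρ x =
    ∑ t, wedgeRep ρ (update w t (B (Fin.snoc x (w t))))

def SatisfiesBracketRel : Prop :=
  ∀ (y : Fin (q + 2) → V) (c : Fin q → V),
    wedgeRep ρ (Fin.cons (B y) c) = ∑ k : Fin (q + 2), (-1 : R) ^ ((k : ℕ) + 1 + (q + 2)) •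
      (wedgeRep ρ (k.removeNth y) * wedgeRep ρ (Fin.cons (y k) c))

theorem extBracket_fst (c : Fin (q + 2) → V × M) : (extBracket B ρ c).1 = B (Prod.fst ∘ c) :=
  rfl

theorem extBracket_snd (c : Fin (q + 2) → V × M) :
    (extBracket B ρ c).2 = (-1 : R) ^ (q + 1) • extAction ρ c :=
  rfl

theorem extAction_apply (c : Fin (q + 2) → V × M) :
    extAction ρ c =
      ∑ k : Fin (q + 2), (-1 : R) ^ (k : ℕ) • wedgeRep ρ (k.removeNth (Prod.fst ∘ c)) (c k).2 := by
  rw [extAction, AlternatingMap.alternatizeUncurryFin_apply]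
  refine Finset.sum_congr rfl fun k _ => ?_
  rw [← Int.cast_smul_eq_zsmul R]
  push_cast
  rfl

theorem extAction_snoc (a : Fin (q + 1) → V × M) (z : V × M) :
    extAction ρ (Fin.snoc a z) =
      ∑ i : Fin (q + 1), (-1 : R) ^ (i : ℕ) •
          wedgeRep ρ (Fin.snoc (i.removeNth (Prod.fst ∘ a)) z.1) (a i).2 +
        (-1 : R) ^ (q + 1) • wedgeRep ρ (Prod.fst ∘ a) z.2 := by
  rw [extAction_apply, Fin.sum_univ_castSucc, Fin.comp_snoc]
  simp [Fin.removeNth_castSucc_snoc]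

theorem extAction_update (b : Fin (q + 2) → V × M) (k : Fin (q + 2)) (z : V × M) :
    extAction ρ (update b k z) =
      (-1 : R) ^ (k : ℕ) • wedgeRep ρ (k.removeNth (Prod.fst ∘ b)) z.2 +
        ∑ t, (-1 : R) ^ (k.succAbove t : ℕ) •
          wedgeRep ρ ((k.succAbove t).removeNth (update (Prod.fst ∘ b) k z.1))
            (b (k.succAbove t)).2 := by
  rw [extAction_apply, Fin.sum_univ_succAbove _ k, comp_update]
  simp

theorem wedgeRep_snoc_bracket (hrel : SatisfiesBracketRel B ρ) (y : Fin (q + 2) → V)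
    (c : Fin q → V) :
    wedgeRep ρ (Fin.snoc c (B y)) = ∑ k : Fin (q + 2), ((-1 : R) ^ (q + 1) * (-1) ^ (k : ℕ)) •
      (wedgeRep ρ (k.removeNth y) * wedgeRep ρ (Fin.snoc c (y k))) := by
  have hsq : ((-1 : R) ^ q) ^ 2 = 1 := by rw [← pow_mul, pow_mul', neg_one_sq, one_pow]
  have hcons : ∀ z, wedgeRep ρ (Fin.cons z c) = (-1 : R) ^ q • wedgeRep ρ (Fin.snoc c z) := by
    intro z
    rw [AlternatingMap.map_snoc, smul_smul, ← sq, hsq, one_smul]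
  rw [AlternatingMap.map_snoc, hrel, Finset.smul_sum]
  refine Finset.sum_congr rfl fun k _ => ?_
  rw [hcons, mul_smul_comm, smul_smul, smul_smul]
  congr 1
  linear_combination (-(-1 : R) ^ (k : ℕ) * (-1) ^ q) * hsq

theorem wedgeRep_mul_wedgeRep_removeNth (hcomm : IsBracketRep B ρ) (x : Fin (q + 1) → V)
    (y : Fin (q + 2) → V) (j : Fin (q + 2)) :
    wedgeRep ρ x * wedgeRep ρ (j.removeNth y) = wedgeRep ρ (j.removeNth y) * wedgeRep ρ x +
      ∑ t, wedgeRep ρ (j.removeNth (update y (j.succAbove t) (B (Fin.snoc x (y (j.succAbove t)))))) := by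
  rw [← sub_eq_iff_eq_add', hcomm]
  simp [Fin.removeNth_apply]

theorem extAction_snoc_extBracket (hcomm : IsBracketRep B ρ) (hrel : SatisfiesBracketRel B ρ)
    (a : Fin (q + 1) → V × M) (b : Fin (q + 2) → V × M) :
    extAction ρ (Fin.snoc a (extBracket B ρ b)) =
      ∑ k, extAction ρ (update b k (extBracket B ρ (Fin.snoc a (b k)))) := by
  set x := Prod.fst ∘ a
  set y := Prod.fst ∘ b
  have hfst : ∀ z : V × M, Prod.fst ∘ (Fin.snoc a z : Fin (q + 2) → V × M) = Fin.snoc x z.1 :=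
    fun z => Fin.comp_snoc _ _ _
  have hε : (-1 : R) ^ (q + 1) * (-1) ^ (q + 1) = 1 := by
    rw [← pow_add, ← two_mul, pow_mul, neg_one_sq, one_pow]
  let g : Fin (q + 2) → Fin (q + 2) → M := fun k j => (-1 : R) ^ (j : ℕ) •
    wedgeRep ρ (j.removeNth (update y k (B (Fin.snoc x (y k))))) (b j).2
  have hR : ∀ k, extAction ρ (update b k (extBracket B ρ (Fin.snoc a (b k)))) =
      ∑ i : Fin (q + 1), ((-1 : R) ^ (k : ℕ) * ((-1) ^ (q + 1) * (-1) ^ (i : ℕ))) •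
          wedgeRep ρ (k.removeNth y) (wedgeRep ρ (Fin.snoc (i.removeNth x) (y k)) (a i).2) +
        (-1 : R) ^ (k : ℕ) • wedgeRep ρ (k.removeNth y) (wedgeRep ρ x (b k).2) +
        ∑ t, g k (k.succAbove t) := by
    intro k
    rw [extAction_update, extBracket_fst, extBracket_snd, extAction_snoc, hfst]
    simp only [smul_add, Finset.smul_sum, map_add, map_sum, map_smul, smul_smul, hε, one_smul]
    rfl
  have hL : extAction ρ (Fin.snoc a (extBracket B ρ b)) =
      ∑ i : Fin (q + 1), ∑ k : Fin (q + 2),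
          ((-1 : R) ^ (i : ℕ) * ((-1) ^ (q + 1) * (-1) ^ (k : ℕ))) •
            wedgeRep ρ (k.removeNth y) (wedgeRep ρ (Fin.snoc (i.removeNth x) (y k)) (a i).2) +
        (∑ j : Fin (q + 2), (-1 : R) ^ (j : ℕ) •
            wedgeRep ρ (j.removeNth y) (wedgeRep ρ x (b j).2) +
          ∑ j, ∑ t, g (j.succAbove t) j) := by
    rw [extAction_snoc, extBracket_fst, extBracket_snd, map_smul, smul_smul, hε, one_smul,
      extAction_apply]
    simp only [wedgeRep_snoc_bracket B ρ hrel, map_sum, LinearMap.sum_apply,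
      LinearMap.smul_apply, Finset.smul_sum, smul_smul, map_smul, ← Module.End.mul_apply,
      wedgeRep_mul_wedgeRep_removeNth B ρ hcomm, LinearMap.add_apply, smul_add,
      Finset.sum_add_distrib]
    rfl
  rw [hL, Finset.sum_congr rfl fun k _ => hR k, Finset.sum_add_distrib, Finset.sum_add_distrib,
    Finset.sum_comm (f := fun k i => _), Fin.sum_sum_succAbove_comm g, add_assoc (Finset.sum _ _)]
  congr 1
  refine Finset.sum_congr rfl fun k _ => Finset.sum_congr rfl fun i _ => ?_
  congr 1
  ring

theorem extBracket_filippov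
    (hB : ∀ (x : Fin (q + 1) → V) (y : Fin (q + 2) → V),
      B (Fin.snoc x (B y)) = ∑ k, B (update y k (B (Fin.snoc x (y k)))))
    (hcomm : IsBracketRep B ρ) (hrel : SatisfiesBracketRel B ρ)
    (a : Fin (q + 1) → V × M) (b : Fin (q + 2) → V × M) :
    extBracket B ρ (Fin.snoc a (extBracket B ρ b)) =
      ∑ k, extBracket B ρ (update b k (extBracket B ρ (Fin.snoc a (b k)))) := by
  refine Prod.ext ?_ ?_
  · simp only [Prod.fst_sum, extBracket_fst, Fin.comp_snoc, comp_update]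
    exact hB _ _
  · rw [Prod.snd_sum, extBracket_snd, extAction_snoc_extBracket B ρ hcomm hrel, Finset.smul_sum]
    rfl

theorem extBracket_inl (a : Fin (q + 2) → V) :
    extBracket B ρ (fun i => (a i, 0)) = (B a, 0) := by
  ext
  · rfl
  · simp [extBracket_snd, extAction_apply]

theorem extBracket_update_inr (a : Fin (q + 2) → V) (i : Fin (q + 2)) (m : M) :
    extBracket B ρ (update (fun j => (a j, 0)) i (0, m)) =
      (0, (-1 : R) ^ (q + 1 - i) • wedgeRep ρ (i.removeNth a) m) := by
  refine Prod.ext (by simp [extBracket_fst, comp_update]) ?_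
  rw [extBracket_snd, extAction_update, neg_one_pow_sub_of_le (Fin.is_le i)]
  simp [smul_smul]
  rfl

theorem extBracket_eq_zero_of_fst_eq_zero (c : Fin (q + 2) → V × M) {i j : Fin (q + 2)}
    (hij : i ≠ j) (hi : (c i).1 = 0) (hj : (c j).1 = 0) : extBracket B ρ c = 0 := by
  have hW : ∀ k l, l ≠ k → (c l).1 = 0 → wedgeRep ρ (k.removeNth (Prod.fst ∘ c)) = 0 := by
    intro k l hlk hl
    obtain ⟨t, rfl⟩ := Fin.exists_succAbove_eq hlk
    exact (wedgeRep ρ).map_coord_zero t hl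
  refine Prod.ext (B.map_coord_zero i hi) ?_
  rw [Prod.snd_zero, extBracket_snd, extAction_apply, Finset.sum_eq_zero, smul_zero]
  intro k _
  obtain ⟨l, hlk, hl⟩ : ∃ l, l ≠ k ∧ (c l).1 = 0 := by
    by_cases hik : i = k
    · exact ⟨j, hik ▸ hij.symm, hj⟩
    · exact ⟨i, hik, hi⟩
  rw [hW k l hlk hl, LinearMap.zero_apply, smul_zero]

end ExtBracket

theorem snocFam_eq_snoc {α : Type*} {q : ℕ} (g : Fin (q + 1) → α) (x : α) :
    snocFam (n := q + 2) g x = Fin.snoc g x := by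
  funext i
  simp only [snocFam, Fin.snoc, Fin.castLT]
  rfl

theorem isFilippov_iff_snoc {F V : Type*} [Field F] [AddCommGroup V] [Module F V] {q : ℕ}
    (B : (Fin (q + 2) → V) → V) :
    IsFilippov (F := F) B ↔ ∀ (x : Fin (q + 1) → V) (y : Fin (q + 2) → V),
      B (Fin.snoc x (B y)) = ∑ k, B (update y k (B (Fin.snoc x (y k)))) := by
  simp only [IsFilippov, snocFam_eq_snoc]
  exact Iff.rfl

theorem lie_rep_gives_nLieModule_general {F : Type*} [Field F]
    {V : Type*} [AddCommGroup V] [Module F V] (n : ℕ) (hn : 2 ≤ n)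
    (B : V [⋀^Fin n]→ₗ[F] V)
    (hB : IsFilippov (F := F) (fun v => B v))
    (M : Type*) [AddCommGroup M] [Module F M]
    (Br : ⋀[F]^(n-1) V →ₗ[F] ⋀[F]^(n-1) V →ₗ[F] ⋀[F]^(n-1) V)
    (hBr : ∀ a b : Fin (n - 1) → V,
      Br (wedge F (n-1) a) (wedge F (n-1) b) =
        ∑ i : Fin (n - 1), wedge F (n-1) (Function.update b i (B (snocFam a (b i)))))
    (ρ : ⋀[F]^(n-1) V →ₗ[F] Module.End F M)
    (hρhom : ∀ x y : ⋀[F]^(n-1) V, ρ (Br x y) = ρ x * ρ y - ρ y * ρ x)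
    (hρrel : ∀ (a : Fin n → V) (c : Fin (n - 2) → V),
      ρ (wedge F (n-1) (consFam hn (B a) c)) =
        ∑ i : Fin n, ((-1 : F) ^ ((i : ℕ) + 1 + n)) •
          (ρ (wedge F (n-1) (omitFam hn a i)) * ρ (wedge F (n-1) (consFam hn (a i) c)))) :
    ∃ B' : (V × M) [⋀^Fin n]→ₗ[F] (V × M),
      (∀ a : Fin n → V, B' (fun i => (a i, (0 : M))) = (B a, 0)) ∧
      (∀ (i : Fin n) (a : Fin n → V) (m : M),
        B' (Function.update (fun j => ((a j : V), (0 : M))) i ((0 : V), m)) =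
          (0, ((-1 : F) ^ (n - ((i : ℕ) + 1))) • ρ (wedge F (n-1) (omitFam hn a i)) m)) ∧
      (∀ c : Fin n → V × M, ∀ i j : Fin n,
        i ≠ j → (c i).1 = 0 → (c j).1 = 0 → B' c = 0) ∧
      IsFilippov (F := F) (fun v => B' v) := by
  obtain ⟨q, rfl⟩ : ∃ q, n = q + 2 := ⟨n - 2, by omega⟩
  have hcomm : IsBracketRep B ρ := fun x w =>
    (hρhom _ _).symm.trans ((congrArg ρ (hBr x w)).trans (map_sum ρ _ _))
  refine ⟨extBracket B ρ, extBracket_inl B ρ, fun i a m => ?_,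
    fun c i j hij hi hj => extBracket_eq_zero_of_fst_eq_zero B ρ c hij hi hj,
    (isFilippov_iff_snoc _).2 (extBracket_filippov B ρ ((isFilippov_iff_snoc _).1 hB) hcomm hρrel)⟩
  rw [extBracket_update_inr, show q + 2 - ((i : ℕ) + 1) = q + 1 - i by omega]
  rfl

/-- Given an `n`-Lie algebra `(V,B)` and a Lie algebra representation
`ρ : ⋀^{n-1}V → End_F(M)` (for the bracket `Br` induced by `B` on `⋀^{n-1}V`) on which the
relations `ρ(B(a_1,…,a_n)∧a_{n+1}∧⋯∧a_{2n-2}) = Σ_{i=1}^n (−1)^{i+n}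
ρ(a_1∧⋯∧â_i∧⋯∧a_n)∘ρ(a_i∧a_{n+1}∧⋯∧a_{2n-2})` hold, the bracket `B'` on `V ⊕ M`
defined by `B'|_{Vⁿ} = B`, `B'(a_1,…,m at slot i,…,a_n) = (−1)^{n−i} ρ(a_1∧⋯∧â_i∧⋯∧a_n)(m)`,
and `B' = 0` when two arguments lie in `M`, is an alternating multilinear map satisfying
the Filippov–Jacobi identity; thus `M` is an `n`-Lie module over `V`. -/
theorem lie_rep_gives_nLieModule {F : Type*} [Field F] [CharZero F]
    {V : Type*} [AddCommGroup V] [Module F V] (n : ℕ) (hn : 2 ≤ n)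
    (B : V [⋀^Fin n]→ₗ[F] V)
    (hB : IsFilippov (F := F) (fun v => B v))
    (M : Type*) [AddCommGroup M] [Module F M]
    (Br : ⋀[F]^(n-1) V →ₗ[F] ⋀[F]^(n-1) V →ₗ[F] ⋀[F]^(n-1) V)
    (hBr : ∀ a b : Fin (n - 1) → V,
      Br (wedge F (n-1) a) (wedge F (n-1) b) =
        ∑ i : Fin (n - 1), wedge F (n-1) (Function.update b i (B (snocFam a (b i)))))
    (ρ : ⋀[F]^(n-1) V →ₗ[F] Module.End F M)
    (hρhom : ∀ x y : ⋀[F]^(n-1) V, ρ (Br x y) = ρ x * ρ y - ρ y * ρ x)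
    (hρrel : ∀ (a : Fin n → V) (c : Fin (n - 2) → V),
      ρ (wedge F (n-1) (consFam hn (B a) c)) =
        ∑ i : Fin n, ((-1 : F) ^ ((i : ℕ) + 1 + n)) •
          (ρ (wedge F (n-1) (omitFam hn a i)) * ρ (wedge F (n-1) (consFam hn (a i) c)))) :
    ∃ B' : (V × M) [⋀^Fin n]→ₗ[F] (V × M),
      (∀ a : Fin n → V, B' (fun i => (a i, (0 : M))) = (B a, 0)) ∧
      (∀ (i : Fin n) (a : Fin n → V) (m : M),
        B' (Function.update (fun j => ((a j : V), (0 : M))) i ((0 : V), m)) =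
          (0, ((-1 : F) ^ (n - ((i : ℕ) + 1))) • ρ (wedge F (n-1) (omitFam hn a i)) m)) ∧
      (∀ c : Fin n → V × M, ∀ i j : Fin n,
        i ≠ j → (c i).1 = 0 → (c j).1 = 0 → B' c = 0) ∧
      IsFilippov (F := F) (fun v => B' v) :=
  lie_rep_gives_nLieModule_general n hn B hB M Br hBr ρ hρhom hρrel
end

section
/- Let L be a Lie algebra over ℂ and let M be a nonzero irreducible L-module (its only Lie submodules are 0 and M) whose dimension over ℂ is countable (Module.rank ℂ M ≤ ℵ₀). If z ∈ L is central, i.e. ⁅z,x⁆ = 0 for all x ∈ L, then z acts on M by a scalar: there exists c ∈ ℂ such that ⁅z,m⁆ = c • m for all m ∈ M. -/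
/-!
Since `z` is central, each `z - c` commutes with the action of `L`, so by Schur's lemma it is
either zero or invertible on the irreducible module `M`. If it were invertible for every `c`, then,
`ℂ` being algebraically closed, every nonzero polynomial in `z` would be invertible, so `ℂ(X)`
would act on `M` through `X ↦ z`; evaluating at a nonzero vector would embed `ℂ(X)`, whose
dimension is at least `#ℂ = 𝔠` (it contains the independent family `(X - c)⁻¹`), into the
countable-dimensional `M`.
-/

open Polynomial Cardinal LieModule

universe u v

section Spectrum

variable {K A : Type*} [Field K] [Ring A] [Algebra K A]

theorem isUnit_aeval_of_spectrum_eq_empty [IsAlgClosed K] {a : A} (ha : spectrum K a = ∅)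
    {p : K[X]} (hp : p ≠ 0) : IsUnit (aeval a p) := by
  rcases le_or_gt p.degree 0 with hdeg | hdeg
  · rw [eq_C_of_degree_le_zero hdeg] at hp ⊢
    rw [aeval_C]
    exact (Ne.isUnit (C_ne_zero.mp hp)).map (algebraMap K A)
  · rw [← spectrum.zero_notMem_iff K, spectrum.map_polynomial_aeval_of_degree_pos a p hdeg, ha,
      Set.image_empty]
    exact Set.notMem_empty 0

/- The double centralizer of `a` is a commutative subalgebra containing `a` and the inverses of
its units, so the universal property of `K(X)` applies there. -/
open scoped IsMulCommutative in
theorem nonempty_ratFunc_algHom_of_isUnit_aeval {a : A}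
    (h : ∀ p : K[X], p ≠ 0 → IsUnit (aeval a p)) : Nonempty (RatFunc K →ₐ[K] A) := by
  let S := Subalgebra.centralizer K (Subalgebra.centralizer K {a} : Set A)
  have : IsMulCommutative S := .of_setLike_mul_comm
    (Set.centralizer_centralizer_comm_of_comm (by simp))
  have haS : a ∈ S := Set.subset_centralizer_centralizer rfl
  let g : K[X] →ₐ[K] S := aeval ⟨a, haS⟩
  have hg (p : K[X]) : (g p : A) = aeval a p := by simp [g]
  have hunit (p : nonZeroDivisors K[X]) : IsUnit (g p) := by
    obtain ⟨u, hu⟩ := h p (nonZeroDivisors.ne_zero p.2)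
    have hinv : (↑u⁻¹ : A) ∈ S := fun b hb => by
      have : Commute b u := hu ▸ (hg p ▸ (g p).2 b hb)
      exact this.units_inv_right.eq
    refine isUnit_iff_exists_inv.mpr ⟨⟨_, hinv⟩, Subtype.ext ?_⟩
    simp [hg, ← hu]
  exact ⟨S.val.comp (IsLocalization.liftAlgHom hunit)⟩

end Spectrum

theorem RatFunc.cardinalMk_le_rank (K : Type u) [Field K] : #K ≤ Module.rank K (RatFunc K) := by
  rw [Algebra.Transcendental.rank_eq_cardinalMk]
  exact mk_le_of_injective (algebraMap K (RatFunc K)).injective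

namespace Module.End

variable {K : Type u} {M : Type v} [Field K] [AddCommGroup M] [Module K M] [Nontrivial M]

theorem lift_rank_le_of_algHom {F : Type*} [Field F] [Algebra K F] (φ : F →ₐ[K] Module.End K M) :
    lift.{v} (Module.rank K F) ≤ lift (Module.rank K M) := by
  obtain ⟨m, hm⟩ := exists_ne (0 : M)
  refine LinearMap.lift_rank_le_of_injective ((LinearMap.applyₗ m).comp φ.toLinearMap) ?_
  refine (injective_iff_map_eq_zero _).mpr fun r hr => by_contra fun hr0 => hm ?_
  exact ((isUnit_iff _).mp ((Ne.isUnit hr0).map φ)).injective (hr.trans (map_zero _).symm)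

theorem spectrum_nonempty_of_lift_rank_lt [IsAlgClosed K]
    (h : lift.{u} (Module.rank K M) < lift.{v} #K) (f : Module.End K M) :
    (spectrum K f).Nonempty := by
  by_contra hf
  obtain ⟨φ⟩ := nonempty_ratFunc_algHom_of_isUnit_aeval fun _ =>
    isUnit_aeval_of_spectrum_eq_empty (Set.not_nonempty_iff_eq_empty.mp hf)
  exact h.not_ge ((lift_le.mpr (RatFunc.cardinalMk_le_rank K)).trans (lift_rank_le_of_algHom φ))

end Module.End

section Schur

variable {R L M N : Type*} [CommRing R] [LieRing L]
  [AddCommGroup M] [Module R M] [LieRingModule L M]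
  [AddCommGroup N] [Module R N] [LieRingModule L N]

theorem LieModuleHom.bijective_of_ne_zero [IsIrreducible R L M] [IsIrreducible R L N]
    {f : M →ₗ⁅R,L⁆ N} (hf : f ≠ 0) : Function.Bijective f := by
  refine ⟨f.ker_eq_bot.mp ((IsSimpleOrder.eq_bot_or_eq_top f.ker).resolve_right fun h => hf ?_),
    f.range_eq_top.mp ((IsSimpleOrder.eq_bot_or_eq_top f.range).resolve_left fun h => hf ?_)⟩
  · ext m; exact f.mem_ker.mp (h ▸ LieSubmodule.mem_top m)
  · ext m; exact (LieSubmodule.mem_bot _).mp (h ▸ (f.mem_range _).mpr ⟨m, rfl⟩)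

def Module.End.toLieModuleHom [LieAlgebra R L] [LieModule R L M] (f : Module.End R M)
    (hf : ∀ x : L, Commute (toEnd R L M x) f) : M →ₗ⁅R,L⁆ M where
  __ := f
  map_lie' {x m} := (LinearMap.congr_fun (hf x) m).symm

end Schur

theorem LieModule.exists_eq_algebraMap_of_commute {K : Type u} {L : Type*} {M : Type v} [Field K]
    [IsAlgClosed K] [LieRing L] [LieAlgebra K L] [AddCommGroup M] [Module K M]
    [LieRingModule L M] [LieModule K L M] [IsIrreducible K L M]
    (h : lift.{u} (Module.rank K M) < lift.{v} #K)
    {f : Module.End K M} (hf : ∀ x : L, Commute (toEnd K L M x) f) :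
    ∃ c : K, f = algebraMap K _ c := by
  have := nontrivial_of_isIrreducible K L M
  obtain ⟨c, hc⟩ := Module.End.spectrum_nonempty_of_lift_rank_lt h f
  refine ⟨c, (sub_eq_zero.mp (not_not.mp fun hne => hc ?_)).symm⟩
  let g := (algebraMap K _ c - f).toLieModuleHom
    fun x => (Algebra.commute_algebraMap_right c _).sub_right (hf x)
  have hg : g ≠ 0 := fun h0 => hne (congr_arg LieModuleHom.toLinearMap h0)
  exact (Module.End.isUnit_iff _).mpr (LieModuleHom.bijective_of_ne_zero hg)

/-- Dixmier–Schur lemma: if `M` is a nonzero irreducible Lie module of countable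
dimension over a complex Lie algebra `L`, then any central element `z` of `L`
acts on `M` by a scalar. -/
theorem central_acts_by_scalar_on_irreducible
    (L : Type*) [LieRing L] [LieAlgebra ℂ L]
    (M : Type*) [AddCommGroup M] [Module ℂ M] [LieRingModule L M] [LieModule ℂ L M]
    (hMne : Nontrivial M)
    (hirr : ∀ N : LieSubmodule ℂ L M, N = ⊥ ∨ N = ⊤)
    (hdim : Module.rank ℂ M ≤ Cardinal.aleph0)
    (z : L) (hz : ∀ x : L, ⁅z, x⁆ = 0) :
    ∃ c : ℂ, ∀ m : M, ⁅z, m⁆ = c • m := by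
  have : IsIrreducible ℂ L M := .mk fun N hN => (hirr N).resolve_left hN
  have hrank : lift.{0} (Module.rank ℂ M) < lift #ℂ := by
    simpa [mk_complex] using hdim.trans_lt aleph0_lt_continuum
  have hzc : z ∈ LieAlgebra.center ℂ L := fun x => by rw [← lie_skew, hz, neg_zero]
  obtain ⟨c, hc⟩ := exists_eq_algebraMap_of_commute hrank (commute_toEnd_of_mem_center_right M hzc)
  exact ⟨c, fun m => by simpa [Algebra.algebraMap_eq_smul_one] using LinearMap.congr_fun hc m⟩
end

section
/- Let L be a Lie algebra over ℂ, let I be a Lie ideal of L contained in the center of L (⁅x,y⁆ = 0 for all x ∈ I, y ∈ L), and let S be a Lie subalgebra of L such that L = I ⊕ S as ℂ-vector spaces (I and S are complementary subspaces). Let M be a nonzero irreducible L-module whose dimension over ℂ is countable. Then: (a) there exists a ℂ-linear functional λ : I → ℂ such that ⁅x,m⁆ = λ(x) • m for all x ∈ I and m ∈ M; and (b) M is irreducible as a module over S, i.e. the only S-invariant subspaces of M are 0 and M. -/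
/-!
If an endomorphism `f` of a module `V` over an algebraically closed field `k` had empty spectrum,
the resolvents `(c - f)⁻¹`, `c : k`, would be linearly independent. For an irreducible module the
commutant is a division algebra (Schur) that embeds into `V` by evaluation at a nonzero vector,
so when `dim V < #k` each of its elements has a point `c` in its spectrum and therefore equals `c`
(Dixmier). Central elements of `L` act by elements of the commutant, hence by scalars depending
linearly on the element. Since `L = I + S` and `I` acts by scalars, every `S`-invariant subspace
is `L`-invariant, so irreducibility over `L` gives irreducibility over `S`.
-/

open Polynomial Cardinal

universe u v w

namespace spectrum

variable {k : Type u} {A : Type v} [Field k] [IsAlgClosed k] [Ring A] [Algebra k A]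

theorem isUnit_aeval_of_eq_empty {a : A} (ha : spectrum k a = ∅) {p : k[X]} (hp : p ≠ 0) :
    IsUnit (aeval a p) := by
  rcases le_or_gt p.degree 0 with hdeg | hdeg
  · rw [eq_C_of_degree_le_zero hdeg, aeval_C]
    refine (IsUnit.mk0 _ fun h0 => hp ?_).map (algebraMap k A)
    rw [eq_C_of_degree_le_zero hdeg, h0, C_0]
  · by_contra h
    have h0 := (spectrum.zero_mem_iff k).mpr h
    rwa [map_polynomial_aeval_of_degree_pos a p hdeg, ha, Set.image_empty] at h0

theorem linearIndependent_resolvent_of_eq_empty [Nontrivial A] {a : A} (ha : spectrum k a = ∅) :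
    LinearIndependent k (resolvent (R := k) a) := by
  classical
  refine linearIndependent_iff'.2 fun s m hsum i hi => ?_
  let p : k[X] := ∑ j ∈ s, C (m j) * Lagrange.nodal (s.erase j) id
  -- multiplying the relation by `∏ j ∈ s, (a - j)` clears the denominators
  have hresolvent : ∀ j ∈ s, resolvent a j * aeval a (Lagrange.nodal s id) =
      -aeval a (Lagrange.nodal (s.erase j) id) := fun j hj => by
    have hunit : IsUnit (algebraMap k A j - a) := spectrum.notMem_iff.mp (ha ▸ Set.notMem_empty j)
    rw [Lagrange.nodal_eq_mul_nodal_erase hj, map_mul, ← mul_assoc, map_sub, aeval_X, aeval_C,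
      id_eq, ← neg_sub, mul_neg, resolvent, Ring.inverse_mul_cancel _ hunit, neg_one_mul]
  have hp : aeval a p = 0 := by
    have := congr_arg (· * aeval a (Lagrange.nodal s id)) hsum
    simp only [Finset.sum_mul, smul_mul_assoc, zero_mul] at this
    rw [← neg_eq_zero, ← this, map_sum, ← Finset.sum_neg_distrib]
    refine Finset.sum_congr rfl fun j hj => ?_
    rw [hresolvent j hj, map_mul, aeval_C, Algebra.algebraMap_eq_smul_one, smul_mul_assoc,
      one_mul, smul_neg]
  have hp0 : p = 0 := by
    by_contra h
    exact (isUnit_aeval_of_eq_empty ha h).ne_zero hp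
  have heval : eval i p = m i * eval i (Lagrange.nodal (s.erase i) id) := by
    rw [eval_finsetSum, Finset.sum_eq_single i]
    · simp only [eval_mul, eval_C]
    · intro j hj hji
      rw [eval_mul]
      exact mul_eq_zero_of_right _
        (Lagrange.eval_nodal_at_node (v := id) (Finset.mem_erase.2 ⟨hji.symm, hi⟩))
    · exact fun h => absurd hi h
  rw [hp0, eval_zero, eq_comm, mul_eq_zero] at heval
  exact heval.resolve_right
    (Lagrange.eval_nodal_not_at_node fun j hj => (Finset.ne_of_mem_erase hj).symm)

theorem nonempty_of_isAlgClosed_of_rank_lt [Nontrivial A]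
    (h : lift.{u} (Module.rank k A) < lift.{v} #k) (a : A) : (spectrum k a).Nonempty := by
  rw [Set.nonempty_iff_ne_empty]
  intro ha
  exact h.not_ge (linearIndependent_resolvent_of_eq_empty ha).cardinal_lift_le_rank

end spectrum

/-- Dixmier's lemma. -/
theorem IsSimpleModule.algebraMap_end_bijective_of_rank_lt {A : Type w} {V : Type v} (k : Type u)
    [Field k] [IsAlgClosed k] [Ring A] [Algebra k A] [AddCommGroup V] [Module k V] [Module A V]
    [IsScalarTower k A V] [IsSimpleModule A V]
    (h : lift.{u} (Module.rank k V) < lift.{v} #k) :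
    Function.Bijective (algebraMap k (Module.End A V)) := by
  classical
  have : Nontrivial V := IsSimpleModule.nontrivial A V
  obtain ⟨v, hv⟩ := exists_ne (0 : V)
  let eval : Module.End A V →ₗ[k] V :=
    { toFun f := f v
      map_add' _ _ := rfl
      map_smul' _ _ := rfl }
  have heval : Function.Injective eval := by
    refine (injective_iff_map_eq_zero eval).2 fun f hf => ?_
    by_contra hf0
    exact hv ((LinearMap.bijective_of_ne_zero hf0).1 (hf.trans f.map_zero.symm))
  have hrank : lift.{u} (Module.rank k (Module.End A V)) < lift.{v} #k :=
    (lift_le.2 (LinearMap.rank_le_of_injective eval heval)).trans_lt h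
  refine ⟨(algebraMap k _).injective, fun f => ?_⟩
  obtain ⟨c, hc⟩ := spectrum.nonempty_of_isAlgClosed_of_rank_lt hrank f
  exact ⟨c, sub_eq_zero.1 (not_not.1 (mt isUnit_iff_ne_zero.2 hc))⟩

namespace LieModule

section CommRing

variable (R : Type u) (L : Type w) (M : Type v) [CommRing R] [LieRing L] [LieAlgebra R L]
  [AddCommGroup M] [Module R M] [LieRingModule L M] [LieModule R L M]

/-- The image of the universal enveloping algebra of `L` in `Module.End R M`. -/
abbrev envelope : Subalgebra R (Module.End R M) :=
  Algebra.adjoin R (Set.range (toEnd R L M))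

instance isSimpleModule_envelope [IsIrreducible R L M] : IsSimpleModule (envelope R L M) M := by
  have := nontrivial_of_isIrreducible R L M
  suffices ∀ N : Submodule (envelope R L M) M, N = ⊥ ∨ N = ⊤ from { eq_bot_or_eq_top := this }
  intro N
  let N' : LieSubmodule R L M :=
    { N.restrictScalars R with
      lie_mem := fun {x _} hm => N.smul_mem ⟨toEnd R L M x, Algebra.subset_adjoin ⟨x, rfl⟩⟩ hm }
  refine (eq_bot_or_eq_top N').imp (fun h => eq_bot_iff.2 fun m hm => ?_)
    (fun h => eq_top_iff.2 fun m _ => ?_)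
  · have : m ∈ N' := hm
    rwa [h, LieSubmodule.mem_bot] at this
  · exact (h ▸ LieSubmodule.mem_top m : m ∈ N')

theorem toEnd_mem_centralizer_range_toEnd {x : L} (hx : x ∈ LieAlgebra.center R L) :
    toEnd R L M x ∈ Subalgebra.centralizer R (Set.range (toEnd R L M)) := by
  rintro _ ⟨y, rfl⟩
  refine LinearMap.ext fun m => ?_
  change ⁅y, ⁅x, m⁆⁆ = ⁅x, ⁅y, m⁆⁆
  rw [leibniz_lie, (mem_maxTrivSubmodule R L L x).1 hx y, zero_lie, zero_add]

end CommRing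

section IsAlgClosed

variable (k : Type u) (L : Type w) (M : Type v) [Field k] [IsAlgClosed k] [LieRing L]
  [LieAlgebra k L] [AddCommGroup M] [Module k M] [LieRingModule L M] [LieModule k L M]
  [IsIrreducible k L M]

theorem centralizer_range_toEnd_eq_bot (h : lift.{u} (Module.rank k M) < lift.{v} #k) :
    Subalgebra.centralizer k (Set.range (toEnd k L M)) = ⊥ := by
  refine eq_bot_iff.2 fun T hT => ?_
  have hcomm : ∀ a ∈ envelope k L M, a * T = T * a := fun a ha =>
    (Algebra.adjoin_le_centralizer_centralizer k _ ha T hT).symm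
  let T' : Module.End (envelope k L M) M :=
    { T with map_smul' := fun a m => (LinearMap.congr_fun (hcomm a a.2) m).symm }
  obtain ⟨c, hc⟩ := (IsSimpleModule.algebraMap_end_bijective_of_rank_lt k h).2 T'
  exact Algebra.mem_bot.2 ⟨c, LinearMap.ext fun m => LinearMap.congr_fun hc m⟩

theorem exists_centralCharacter (h : lift.{u} (Module.rank k M) < lift.{v} #k) :
    ∃ χ : LieAlgebra.center k L →ₗ[k] k, ∀ (x : LieAlgebra.center k L) (m : M),
      ⁅(x : L), m⁆ = χ x • m := by
  have := nontrivial_of_isIrreducible k L M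
  let f := ((toEnd k L M : L →ₗ[k] Module.End k M) ∘ₗ
      (LieAlgebra.center k L).toSubmodule.subtype).codRestrict
    (⊥ : Subalgebra k (Module.End k M)).toSubmodule fun x =>
      centralizer_range_toEnd_eq_bot k L M h ▸ toEnd_mem_centralizer_range_toEnd k L M x.2
  refine ⟨(Algebra.botEquiv k (Module.End k M)).toLinearMap ∘ₗ f, fun x m => ?_⟩
  have hx := congr_arg Subtype.val ((Algebra.botEquiv k (Module.End k M)).symm_apply_apply (f x))
  rw [Algebra.botEquiv_symm_apply] at hx
  have hxm := (LinearMap.congr_fun hx m).symm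
  simp only [SubalgebraClass.coe_algebraMap, Module.algebraMap_end_apply] at hxm
  exact hxm

end IsAlgClosed

end LieModule

theorem LieModule.lie_mem_of_sup_eq_top {R L M : Type*} [CommRing R] [LieRing L] [LieAlgebra R L]
    [AddCommGroup M] [Module R M] [LieRingModule L M] {I : Submodule R L} {S : LieSubalgebra R L}
    (hIS : I ⊔ S.toSubmodule = ⊤) (hI : ∀ x ∈ I, ∃ c : R, ∀ m : M, ⁅x, m⁆ = c • m)
    {N : Submodule R M} (hN : ∀ s ∈ S, ∀ m ∈ N, ⁅s, m⁆ ∈ N) (x : L) {m : M} (hm : m ∈ N) :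
    ⁅x, m⁆ ∈ N := by
  obtain ⟨a, ha, s, hs, rfl⟩ := Submodule.mem_sup.1 (hIS ▸ Submodule.mem_top (x := x))
  obtain ⟨c, hc⟩ := hI a ha
  rw [add_lie, hc]
  exact N.add_mem (N.smul_mem c hm) (hN s hs m hm)

/-- Let `L` be a complex Lie algebra, `I` a central Lie ideal, and `S` a Lie subalgebra with
`L = I ⊕ S` as vector spaces. If `M` is a nonzero irreducible `L`-module of countable
dimension, then (a) `I` acts by scalars via a linear functional `λ : I → ℂ`, and
(b) `M` is irreducible as an `S`-module. -/
theorem central_ideal_scalar_and_irreducible_over_complement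
    (L : Type*) [LieRing L] [LieAlgebra ℂ L]
    (I : LieIdeal ℂ L) (hI : ∀ x ∈ I, ∀ y : L, ⁅x, y⁆ = 0)
    (S : LieSubalgebra ℂ L)
    (hcompl : IsCompl (LieSubmodule.toSubmodule I) S.toSubmodule)
    (M : Type*) [AddCommGroup M] [Module ℂ M] [LieRingModule L M] [LieModule ℂ L M]
    (hMne : Nontrivial M)
    (hirr : ∀ N : LieSubmodule ℂ L M, N = ⊥ ∨ N = ⊤)
    (hdim : Module.rank ℂ M ≤ Cardinal.aleph0) :
    (∃ lam : I →ₗ[ℂ] ℂ, ∀ (x : I) (m : M), ⁅(x : L), m⁆ = lam x • m) ∧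
    (∀ N : Submodule ℂ M, (∀ s ∈ S, ∀ m ∈ N, ⁅s, m⁆ ∈ N) → N = ⊥ ∨ N = ⊤) := by
  have : LieModule.IsIrreducible ℂ L M := .mk fun N hN => (hirr N).resolve_left hN
  have hrank : lift (Module.rank ℂ M) < lift #ℂ := by
    rw [mk_complex, lift_continuum]
    exact (lift_le_aleph0.2 hdim).trans_lt aleph0_lt_continuum
  obtain ⟨χ, hχ⟩ := LieModule.exists_centralCharacter ℂ L M hrank
  have hIcenter : I ≤ LieAlgebra.center ℂ L := fun x hx =>
    (LieModule.mem_maxTrivSubmodule ℂ L L x).2 fun y => by rw [← lie_skew, hI x hx y, neg_zero]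
  have hlam (x : I) (m : M) : ⁅(x : L), m⁆ = χ (LieSubmodule.inclusion hIcenter x) • m :=
    hχ (LieSubmodule.inclusion hIcenter x) m
  refine ⟨⟨χ ∘ₗ (LieSubmodule.inclusion hIcenter : I →ₗ[ℂ] _), hlam⟩, fun N hN => ?_⟩
  let N' : LieSubmodule ℂ L M :=
    { N with
      lie_mem := LieModule.lie_mem_of_sup_eq_top hcompl.sup_eq_top
        (fun x hx => ⟨_, hlam ⟨x, hx⟩⟩) hN _ }
  exact (hirr N').imp (congr_arg LieSubmodule.toSubmodule) (congr_arg LieSubmodule.toSubmodule)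
end
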